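/- Let M = A + B K where A, B are real matrices of sizes n×n and n×m, and suppose there exist a symmetric positive definite Ω ∈ ℝ^{n×n} and Π ∈ ℝ^{m×n} such that (A Ω + B Π)ᵀ Ω⁻¹ (A Ω + B Π) − Ω + Ω Ω ≺ 0, where K = Π Ω⁻¹. Then Mᵀ Ω⁻¹ M − Ω⁻¹ + I ≺ 0, and hence M is Schur stable. -/

import Mathlib

/-!
Put `P = Ω⁻¹`. Since `M Ω = A Ω + B Π`, conjugating the LMI by the symmetric invertible
matrix `P` turns it into `Mᵀ P M - P + 1 ≺ 0`, a strict discrete Lyapunov inequality for `M`.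
For a complex eigenpair `M v = μ v` it gives `v* (P - Mᵀ P M) v = (1 - |μ|²) v* P v` with both
quadratic forms positive, so `|μ| < 1`.
-/

open Matrix
open scoped ComplexOrder

namespace Matrix

variable {n : Type*} [Fintype n]

lemma transpose_inv_mul_mul_inv_eq [DecidableEq n] {R : Type*} [CommRing R]
    {Ω : Matrix n n R} (hΩ : Ωᵀ = Ω) (hu : IsUnit Ω) (M : Matrix n n R) :
    (Ω⁻¹)ᵀ * ((M * Ω)ᵀ * Ω⁻¹ * (M * Ω) - Ω + Ω * Ω) * Ω⁻¹ = Mᵀ * Ω⁻¹ * M - Ω⁻¹ + 1 := by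
  have hdet := (isUnit_iff_isUnit_det Ω).mp hu
  rw [transpose_nonsing_inv, hΩ, transpose_mul, hΩ]
  simp only [Matrix.mul_sub, Matrix.sub_mul, Matrix.mul_add, Matrix.add_mul, Matrix.mul_assoc,
    nonsing_inv_mul_cancel_left _ _ hdet, mul_nonsing_inv _ hdet, nonsing_inv_mul _ hdet,
    Matrix.mul_one, Matrix.one_mul]

lemma re_star_dotProduct_map_ofReal_mulVec (R : Matrix n n ℝ) (v : n → ℂ) :
    (star v ⬝ᵥ (R.map Complex.ofReal *ᵥ v)).re =
      (fun i ↦ (v i).re) ⬝ᵥ (R *ᵥ fun i ↦ (v i).re) +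
        (fun i ↦ (v i).im) ⬝ᵥ (R *ᵥ fun i ↦ (v i).im) := by
  simp only [dotProduct, mulVec, map_apply, Pi.star_apply, Complex.star_def, Finset.mul_sum,
    Complex.re_sum, ← Finset.sum_add_distrib]
  refine Finset.sum_congr rfl fun i _ ↦ Finset.sum_congr rfl fun j _ ↦ ?_
  simp only [Complex.mul_re, Complex.conj_re, Complex.conj_im, Complex.mul_im,
    Complex.ofReal_re, Complex.ofReal_im]
  ring

lemma PosDef.map_ofReal {P : Matrix n n ℝ} (hP : P.PosDef) : (P.map Complex.ofReal).PosDef := by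
  have hPc : (P.map Complex.ofReal).IsHermitian :=
    hP.isHermitian.map _ fun r ↦ (Complex.conj_ofReal r).symm
  refine of_dotProduct_mulVec_pos hPc fun v hv ↦ RCLike.pos_iff.mpr
    ⟨?_, hPc.im_star_dotProduct_mulVec_self v⟩
  have hre := hP.posSemidef.dotProduct_mulVec_nonneg (fun i ↦ (v i).re)
  have him := hP.posSemidef.dotProduct_mulVec_nonneg (fun i ↦ (v i).im)
  show 0 < (star v ⬝ᵥ (P.map Complex.ofReal *ᵥ v)).re
  rw [re_star_dotProduct_map_ofReal_mulVec]
  by_cases h : (fun i ↦ (v i).re) = 0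
  · have him_ne : (fun i ↦ (v i).im) ≠ 0 := fun h' ↦
      hv (funext fun i ↦ Complex.ext (congrFun h i) (congrFun h' i))
    exact add_pos_of_nonneg_of_pos hre (hP.dotProduct_mulVec_pos him_ne)
  · exact add_pos_of_pos_of_nonneg (hP.dotProduct_mulVec_pos h) him

lemma norm_lt_one_of_mem_spectrum_of_posDef_sub [DecidableEq n] {𝕜 : Type*} [RCLike 𝕜]
    {M P : Matrix n n 𝕜} (hP : P.PosDef) (hS : (P - Mᴴ * P * M).PosDef) {μ : 𝕜}
    (hμ : μ ∈ spectrum 𝕜 M) : ‖μ‖ < 1 := by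
  rw [← spectrum_toLin', ← Module.End.hasEigenvalue_iff_mem_spectrum] at hμ
  obtain ⟨v, hv⟩ := hμ.exists_hasEigenvector
  have hMv : M *ᵥ v = μ • v := hv.apply_eq_smul
  set q := star v ⬝ᵥ (P *ᵥ v)
  have hquad : star v ⬝ᵥ ((P - Mᴴ * P * M) *ᵥ v) = ((1 - ‖μ‖ ^ 2 : ℝ) : 𝕜) * q := by
    rw [sub_mulVec, ← mulVec_mulVec, ← mulVec_mulVec, dotProduct_sub, dotProduct_mulVec (star v) Mᴴ,
      ← star_mulVec, hMv, star_smul, mulVec_smul, smul_dotProduct, dotProduct_smul,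
      smul_eq_mul, smul_eq_mul, ← mul_assoc, RCLike.star_def, RCLike.conj_mul]
    push_cast
    ring
  have hq := RCLike.pos_iff.mp (hP.dotProduct_mulVec_pos hv.2)
  have hSq := RCLike.pos_iff.mp (hS.dotProduct_mulVec_pos hv.2)
  rw [hquad, RCLike.re_ofReal_mul] at hSq
  have : 0 < 1 - ‖μ‖ ^ 2 := pos_of_mul_pos_left hSq.1 hq.1.le
  nlinarith [norm_nonneg μ]

end Matrix

theorem lmi_implies_closed_loop_schur_stable
    {n m : ℕ} (A : Matrix (Fin n) (Fin n) ℝ) (B : Matrix (Fin n) (Fin m) ℝ)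
    (Ω : Matrix (Fin n) (Fin n) ℝ) (hΩ : Ω.PosDef)
    (Pi : Matrix (Fin m) (Fin n) ℝ)
    (K : Matrix (Fin m) (Fin n) ℝ) (hK : K = Pi * Ω⁻¹)
    (M : Matrix (Fin n) (Fin n) ℝ) (hM : M = A + B * K)
    (hLMI : (-((A * Ω + B * Pi)ᵀ * Ω⁻¹ * (A * Ω + B * Pi) - Ω + Ω * Ω)).PosDef) :
    (-(Mᵀ * Ω⁻¹ * M - Ω⁻¹ + 1)).PosDef ∧
      ∀ μ ∈ spectrum ℂ (M.map (Complex.ofReal)), ‖μ‖ < 1 := by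
  have hΩt : Ωᵀ = Ω := hΩ.isHermitian
  have hMΩ : M * Ω = A * Ω + B * Pi := by
    rw [hM, hK, Matrix.add_mul, Matrix.mul_assoc,
      nonsing_inv_mul_cancel_right _ _ ((isUnit_iff_isUnit_det Ω).mp hΩ.isUnit)]
  have hQ : (-(Mᵀ * Ω⁻¹ * M - Ω⁻¹ + 1)).PosDef := by
    rw [← transpose_inv_mul_mul_inv_eq hΩt hΩ.isUnit, hMΩ, ← Matrix.neg_mul,
      ← Matrix.mul_neg, ← conjTranspose_eq_transpose_of_trivial]
    exact hLMI.conjTranspose_mul_mul_same (mulVec_injective_iff_isUnit.mpr hΩ.inv.isUnit)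
  have hS : (Ω⁻¹ - Mᵀ * Ω⁻¹ * M).PosDef := by
    simpa using hQ.add PosDef.one
  have hmap : (Ω⁻¹ - Mᵀ * Ω⁻¹ * M).map Complex.ofReal = Ω⁻¹.map Complex.ofReal -
      (M.map Complex.ofReal)ᴴ * Ω⁻¹.map Complex.ofReal * M.map Complex.ofReal := by
    ext i j
    simp [mul_apply]
  exact ⟨hQ, fun μ hμ ↦ norm_lt_one_of_mem_spectrum_of_posDef_sub hΩ.inv.map_ofReal
    (hmap ▸ hS.map_ofReal) hμ⟩
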